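/- Let A be a graded ring such that A_+ is finitely generated as a right ideal. Let G be the set of homogeneous right ideals 𝔞 of A such that (A_+)^n ⊆ 𝔞 for some n ≥ 0, where (A_+)^n denotes the n-th power of the two-sided ideal A_+. Then G is a t-filter, and for every t-filter F on A the following are equivalent: (i) A_+ ∈ F; (ii) A_{≥n} ∈ F for every n ∈ ℕ; (iii) G ⊆ F. In particular, G is simultaneously the smallest t-filter containing A_+ and the smallest t-filter containing all the ideals A_{≥n}, n ≥ 0. (Lemma 3.2 and Lemma 3.3.) -/

import Mathlib

/-!
Everything works for an arbitrary homogeneous two-sided ideal `I` in place of `A_+`.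
Since `(A_+)^n ⊆ A_{≥n}`, (iii) gives (ii). For (i) ⇒ (iii) it suffices that every power
`I^n` lies in `F`, and `I^(n+1)` is obtained from `I^n` by (T3) with `𝔞 = I`: for `a ∈ I` the
colon `(I^(n+1) : a)` contains `I^n`.

For `G` only (T3) needs work. Let `I` be generated by finitely many homogeneous elements
`a₁, …, a_k` (the homogeneous components of any finite generating set). If
`I^K ⊆ (𝔟 : aᵢ)` for all `i`, then `I^(K+1) ⊆ 𝔟`. Hence, by induction on `n`, if every colon
`(𝔟 : p)` by a homogeneous `p ∈ I^n` contains a power of `I`, so does `𝔟`: apply the induction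
hypothesis to each `(𝔟 : aᵢ)`, using `((𝔟 : aᵢ) : p) = (𝔟 : aᵢ p)`, and take the largest of
the `k` exponents.
-/

/-- `I ⊆ A` is a right ideal (as a set). -/
def IsRightIdealSet {A : Type*} [Ring A] (I : Set A) : Prop :=
  (0 : A) ∈ I ∧ (∀ x ∈ I, ∀ y ∈ I, x + y ∈ I) ∧ (∀ x ∈ I, -x ∈ I) ∧
    ∀ x ∈ I, ∀ a : A, x * a ∈ I

/-- A subset of a graded ring is homogeneous if it contains all homogeneous
components of each of its elements. -/
def SetIsHomogeneous {A : Type*} [Ring A] (𝒜 : ℕ → AddSubgroup A) [GradedRing 𝒜]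
    (I : Set A) : Prop :=
  ∀ x ∈ I, ∀ n : ℕ, ((DirectSum.decompose 𝒜 x n : 𝒜 n) : A) ∈ I

/-- `a` is a homogeneous element of the graded ring `A`. -/
def IsHomogeneousElem {A : Type*} [Ring A] (𝒜 : ℕ → AddSubgroup A) [GradedRing 𝒜]
    (a : A) : Prop :=
  ∃ n : ℕ, a ∈ 𝒜 n

/-- A t-filter on a graded ring `A`. -/
structure IsTFilter {A : Type*} [Ring A] (𝒜 : ℕ → AddSubgroup A) [GradedRing 𝒜]
    (F : Set (Set A)) : Prop where
  mem_ideal : ∀ I ∈ F, IsRightIdealSet I ∧ SetIsHomogeneous 𝒜 I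
  univ_mem : (Set.univ : Set A) ∈ F
  colon_mem : ∀ I ∈ F, ∀ a : A, IsHomogeneousElem 𝒜 a → {x : A | a * x ∈ I} ∈ F
  saturated : ∀ I ∈ F, ∀ J : Set A, IsRightIdealSet J → SetIsHomogeneous 𝒜 J →
    (∀ a ∈ I, IsHomogeneousElem 𝒜 a → {x : A | a * x ∈ J} ∈ F) → J ∈ F

/-- The product `I·J` of two subsets of `A`: the additive span of the products
`x * y` with `x ∈ I`, `y ∈ J`. -/
def setIdealMul {A : Type*} [Ring A] (I J : Set A) : Set A :=
  (AddSubgroup.closure {z : A | ∃ x ∈ I, ∃ y ∈ J, z = x * y} : AddSubgroup A)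

/-- The `n`-th power of an ideal (as a set); the `0`-th power is `A` itself. -/
def setIdealPow {A : Type*} [Ring A] (I : Set A) : ℕ → Set A
  | 0 => Set.univ
  | n + 1 => setIdealMul I (setIdealPow I n)

/-- The tail `A_{≥ n}`: elements all of whose homogeneous components have
degree `≥ n`.  `A_+ = A_{≥ 1}`. -/
def geIdeal {A : Type*} [Ring A] (𝒜 : ℕ → AddSubgroup A) [GradedRing 𝒜]
    (n : ℕ) : Set A :=
  {x : A | ∀ m : ℕ, m < n → ((DirectSum.decompose 𝒜 x m : 𝒜 m) : A) = 0}

/-- The right ideal of `A` generated by a set `s`. -/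
def rightIdealSpan {A : Type*} [Ring A] (s : Set A) : Set A :=
  (AddSubgroup.closure {y : A | ∃ a ∈ s, ∃ r : A, y = a * r} : AddSubgroup A)

/-- `I` is finitely generated as a right ideal. -/
def IsFGRightIdealSet {A : Type*} [Ring A] (I : Set A) : Prop :=
  ∃ s : Finset A, I = rightIdealSpan (s : Set A)

open Filter

section RightIdeal

variable {A : Type*} [Ring A]

def IsRightIdealSet.toAddSubgroup {I : Set A} (h : IsRightIdealSet I) : AddSubgroup A where
  carrier := I
  zero_mem' := h.1
  add_mem' := fun ha hb => h.2.1 _ ha _ hb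
  neg_mem' := fun ha => h.2.2.1 _ ha

lemma IsRightIdealSet.closure_subset {s I : Set A} (h : IsRightIdealSet I) (hs : s ⊆ I) :
    (AddSubgroup.closure s : Set A) ⊆ I :=
  (AddSubgroup.closure_le h.toAddSubgroup).2 hs

lemma isRightIdealSet_univ : IsRightIdealSet (Set.univ : Set A) :=
  ⟨trivial, fun _ _ _ _ => trivial, fun _ _ => trivial, fun _ _ _ => trivial⟩

lemma IsRightIdealSet.colon {I : Set A} (h : IsRightIdealSet I) (a : A) :
    IsRightIdealSet {x : A | a * x ∈ I} := by
  refine ⟨?_, fun x hx y hy => ?_, fun x hx => ?_, fun x hx b => ?_⟩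
  · simpa using h.1
  · simpa [mul_add] using h.2.1 _ hx _ hy
  · simpa using h.2.2.1 _ hx
  · simpa [mul_assoc] using h.2.2.2 _ hx b

lemma mul_mem_of_mem_closure_left {s : Set A} {C : AddSubgroup A} {x y : A}
    (hx : x ∈ AddSubgroup.closure s) (h : ∀ a ∈ s, a * y ∈ C) : x * y ∈ C :=
  (AddSubgroup.closure_le (C.comap (AddMonoidHom.mulRight y))).2 h hx

lemma mul_mem_of_mem_closure_right {s : Set A} {C : AddSubgroup A} {x y : A}
    (hy : y ∈ AddSubgroup.closure s) (h : ∀ b ∈ s, x * b ∈ C) : x * y ∈ C :=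
  (AddSubgroup.closure_le (C.comap (AddMonoidHom.mulLeft x))).2 h hy

lemma subset_rightIdealSpan (s : Set A) : s ⊆ rightIdealSpan s :=
  fun a ha => AddSubgroup.subset_closure ⟨a, ha, 1, (mul_one a).symm⟩

lemma setIdealMul_mono_right (I : Set A) {J J' : Set A} (h : J ⊆ J') :
    setIdealMul I J ⊆ setIdealMul I J' :=
  AddSubgroup.closure_mono fun _ ⟨x, hx, y, hy, e⟩ => ⟨x, hx, y, h hy, e⟩

lemma isRightIdealSet_setIdealMul (I : Set A) {J : Set A} (hJ : ∀ y ∈ J, ∀ b : A, y * b ∈ J) :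
    IsRightIdealSet (setIdealMul I J) := by
  refine ⟨zero_mem _, fun _ hx _ hy => add_mem hx hy, fun _ hx => neg_mem hx, fun x hx b => ?_⟩
  refine mul_mem_of_mem_closure_left hx ?_
  rintro _ ⟨u, hu, v, hv, rfl⟩
  exact AddSubgroup.subset_closure ⟨u, hu, v * b, hJ v hv b, mul_assoc u v b⟩

lemma isRightIdealSet_setIdealPow (I : Set A) : ∀ n, IsRightIdealSet (setIdealPow I n)
  | 0 => isRightIdealSet_univ
  | n + 1 => isRightIdealSet_setIdealMul I (isRightIdealSet_setIdealPow I n).2.2.2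

lemma setIdealPow_antitone (I : Set A) : Antitone (setIdealPow I) := by
  refine antitone_nat_of_succ_le fun n => ?_
  induction n with
  | zero => exact Set.subset_univ _
  | succ n ih => exact setIdealMul_mono_right I ih

lemma mul_mem_setIdealPow {I : Set A} (hI : ∀ r : A, ∀ x ∈ I, r * x ∈ I) (r : A) :
    ∀ {n : ℕ} {x : A}, x ∈ setIdealPow I n → r * x ∈ setIdealPow I n
  | 0, _, _ => trivial
  | _ + 1, _, hx => by
    refine mul_mem_of_mem_closure_right hx ?_
    rintro _ ⟨u, hu, v, hv, rfl⟩
    exact AddSubgroup.subset_closure ⟨r * u, hI r u hu, v, hv, (mul_assoc r u v).symm⟩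

theorem exists_setIdealPow_subset_of_colon {I : Set A} {t : Finset A} (htI : (t : Set A) ⊆ I)
    (hIt : I ⊆ rightIdealSpan t) (hI : ∀ r : A, ∀ x ∈ I, r * x ∈ I) (P : A → Prop) (hP : P 1)
    (hPt : ∀ a ∈ t, ∀ p, P p → P (a * p)) (n : ℕ) :
    ∀ J : Set A, IsRightIdealSet J →
      (∀ p ∈ setIdealPow I n, P p → ∃ M, setIdealPow I M ⊆ {x : A | p * x ∈ J}) →
      ∃ K, setIdealPow I K ⊆ J := by
  induction n with
  | zero =>
    intro J _ h
    simpa using h 1 trivial hP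
  | succ n ih =>
    intro J hJ h
    have hcolon : ∀ a ∈ t, ∀ᶠ K in atTop, setIdealPow I K ⊆ {x : A | a * x ∈ J} := by
      intro a ha
      obtain ⟨K, hK⟩ := ih _ (hJ.colon a) fun p hp hPp => by
        obtain ⟨M, hM⟩ := h (a * p) (AddSubgroup.subset_closure ⟨a, htI ha, p, hp, rfl⟩)
          (hPt a ha p hPp)
        exact ⟨M, fun x hx => by simpa [mul_assoc] using hM hx⟩
      exact eventually_atTop.2 ⟨K, fun K' hK' => (setIdealPow_antitone I hK').trans hK⟩
    obtain ⟨K, hK⟩ := ((eventually_all_finset t).2 hcolon).exists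
    refine ⟨K + 1, hJ.closure_subset ?_⟩
    rintro _ ⟨x, hx, y, hy, rfl⟩
    refine mul_mem_of_mem_closure_left (C := hJ.toAddSubgroup) (hIt hx) ?_
    rintro _ ⟨a, ha, r, rfl⟩
    rw [mul_assoc]
    exact hK a ha (mul_mem_setIdealPow hI r hy)

end RightIdeal

section Graded

variable {A : Type*} [Ring A] (𝒜 : ℕ → AddSubgroup A) [GradedRing 𝒜]

lemma setIsHomogeneous_univ : SetIsHomogeneous 𝒜 (Set.univ : Set A) :=
  fun _ _ _ => trivial

lemma setIsHomogeneous_colon {I : Set A} (hI : SetIsHomogeneous 𝒜 I) {a : A} {d : ℕ}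
    (ha : a ∈ 𝒜 d) : SetIsHomogeneous 𝒜 {x : A | a * x ∈ I} := by
  intro x hx m
  change a * (DirectSum.decompose 𝒜 x m : A) ∈ I
  rw [← DirectSum.coe_decompose_mul_add_of_left_mem 𝒜 ha]
  exact hI _ hx (d + m)

lemma setIsHomogeneous_closure {H : Set A} (hH : ∀ a ∈ H, IsHomogeneousElem 𝒜 a) :
    SetIsHomogeneous 𝒜 (AddSubgroup.closure H : Set A) := by
  intro x hx n
  refine (AddSubgroup.closure_le ((AddSubgroup.closure H).comap (GradedRing.proj 𝒜 n))).2
    (fun a ha => ?_) hx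
  obtain ⟨d, hd⟩ := hH a ha
  change (DirectSum.decompose 𝒜 a n : A) ∈ AddSubgroup.closure H
  by_cases hdn : d = n
  · subst hdn
    rw [DirectSum.decompose_of_mem_same 𝒜 hd]
    exact AddSubgroup.subset_closure ha
  · rw [DirectSum.decompose_of_mem_ne 𝒜 hd hdn]
    exact zero_mem _

lemma SetIsHomogeneous.mem_closure {I : Set A} (hI : SetIsHomogeneous 𝒜 I) {x : A}
    (hx : x ∈ I) : x ∈ AddSubgroup.closure {a ∈ I | IsHomogeneousElem 𝒜 a} := by
  classical
  rw [← DirectSum.sum_support_decompose 𝒜 x]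
  exact sum_mem fun n _ => AddSubgroup.subset_closure ⟨hI x hx n, n, SetLike.coe_mem _⟩

lemma SetIsHomogeneous.setIdealMul {I J : Set A} (hI : SetIsHomogeneous 𝒜 I)
    (hJ : SetIsHomogeneous 𝒜 J) : SetIsHomogeneous 𝒜 (setIdealMul I J) := by
  set H := {z : A | (∃ x ∈ I, ∃ y ∈ J, z = x * y) ∧ IsHomogeneousElem 𝒜 z}
  have hspan : _root_.setIdealMul I J ⊆ AddSubgroup.closure H := by
    refine (AddSubgroup.closure_le _).2 ?_
    rintro _ ⟨x, hx, y, hy, rfl⟩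
    refine mul_mem_of_mem_closure_left (hI.mem_closure 𝒜 hx) fun a ⟨ha, i, hai⟩ => ?_
    refine mul_mem_of_mem_closure_right (hJ.mem_closure 𝒜 hy) fun b ⟨hb, j, hbj⟩ => ?_
    exact AddSubgroup.subset_closure ⟨⟨a, ha, b, hb, rfl⟩, i + j, SetLike.mul_mem_graded hai hbj⟩
  intro z hz n
  exact AddSubgroup.closure_mono (fun _ h => h.1)
    (setIsHomogeneous_closure 𝒜 (fun _ h => h.2) z (hspan hz) n)

lemma SetIsHomogeneous.setIdealPow {I : Set A} (hI : SetIsHomogeneous 𝒜 I) :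
    ∀ n, SetIsHomogeneous 𝒜 (_root_.setIdealPow I n)
  | 0 => setIsHomogeneous_univ 𝒜
  | n + 1 => hI.setIdealMul 𝒜 (hI.setIdealPow n)

lemma exists_homogeneous_generators {I : Set A} (hI : SetIsHomogeneous 𝒜 I)
    (hfg : IsFGRightIdealSet I) : ∃ t : Finset A,
      (∀ a ∈ t, IsHomogeneousElem 𝒜 a) ∧ (t : Set A) ⊆ I ∧ I ⊆ rightIdealSpan t := by
  classical
  obtain ⟨s, rfl⟩ := hfg
  refine ⟨s.biUnion fun a => (DirectSum.decompose 𝒜 a).support.image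
    fun n => (DirectSum.decompose 𝒜 a n : A), ?_, ?_, ?_⟩
  · simp only [Finset.mem_biUnion, Finset.mem_image]
    rintro _ ⟨a, -, n, -, rfl⟩
    exact ⟨n, SetLike.coe_mem _⟩
  · intro b hb
    simp only [Finset.coe_biUnion, Finset.coe_image, Set.mem_iUnion, Set.mem_image] at hb
    obtain ⟨a, ha, n, -, rfl⟩ := hb
    exact hI a (subset_rightIdealSpan _ ha) n
  · refine (AddSubgroup.closure_le _).2 ?_
    rintro _ ⟨a, ha, r, rfl⟩
    rw [← DirectSum.sum_support_decompose 𝒜 a, Finset.sum_mul]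
    refine sum_mem fun n hn => AddSubgroup.subset_closure ⟨_, ?_, r, rfl⟩
    exact Finset.mem_biUnion.2 ⟨a, ha, Finset.mem_image_of_mem _ hn⟩

end Graded

section Tails

variable {A : Type*} [Ring A] (𝒜 : ℕ → AddSubgroup A) [GradedRing 𝒜]

def geIdealAddSubgroup (n : ℕ) : AddSubgroup A where
  carrier := geIdeal 𝒜 n
  zero_mem' := fun m _ => by simp
  add_mem' := fun hx hy m hm => by simp [hx m hm, hy m hm]
  neg_mem' := fun {x} hx m hm => by
    change GradedRing.proj 𝒜 m (-x) = 0
    rw [map_neg, neg_eq_zero]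
    exact hx m hm

lemma mem_geIdeal_of_mem {a : A} {d n : ℕ} (ha : a ∈ 𝒜 d) (h : n ≤ d) : a ∈ geIdeal 𝒜 n :=
  fun _ hm => DirectSum.decompose_of_mem_ne 𝒜 ha (by omega)

lemma mem_closure_of_mem_geIdeal {x : A} {n : ℕ} (hx : x ∈ geIdeal 𝒜 n) :
    x ∈ AddSubgroup.closure {a : A | ∃ d, n ≤ d ∧ a ∈ 𝒜 d} := by
  classical
  rw [← DirectSum.sum_support_decompose 𝒜 x]
  refine sum_mem fun d _ => ?_
  by_cases hd : d < n
  · rw [hx d hd]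
    exact zero_mem _
  · exact AddSubgroup.subset_closure ⟨d, not_lt.1 hd, SetLike.coe_mem _⟩

lemma mul_mem_geIdeal {x y : A} {i j : ℕ} (hx : x ∈ geIdeal 𝒜 i) (hy : y ∈ geIdeal 𝒜 j) :
    x * y ∈ geIdeal 𝒜 (i + j) := by
  refine mul_mem_of_mem_closure_left (C := geIdealAddSubgroup 𝒜 (i + j))
    (mem_closure_of_mem_geIdeal 𝒜 hx) fun a ⟨d, hd, ha⟩ => ?_
  refine mul_mem_of_mem_closure_right (mem_closure_of_mem_geIdeal 𝒜 hy) fun b ⟨e, he, hb⟩ => ?_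
  exact mem_geIdeal_of_mem 𝒜 (SetLike.mul_mem_graded ha hb) (by omega)

lemma mem_geIdeal_zero (x : A) : x ∈ geIdeal 𝒜 0 :=
  fun _ h => absurd h (Nat.not_lt_zero _)

lemma mul_mem_geIdeal_left (r : A) {x : A} {n : ℕ} (hx : x ∈ geIdeal 𝒜 n) :
    r * x ∈ geIdeal 𝒜 n := by
  simpa using mul_mem_geIdeal 𝒜 (mem_geIdeal_zero 𝒜 r) hx

lemma isRightIdealSet_geIdeal (n : ℕ) : IsRightIdealSet (geIdeal 𝒜 n) :=
  ⟨(geIdealAddSubgroup 𝒜 n).zero_mem, fun _ hx _ hy => (geIdealAddSubgroup 𝒜 n).add_mem hx hy,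
    fun _ hx => (geIdealAddSubgroup 𝒜 n).neg_mem hx,
    fun x hx b => by simpa using mul_mem_geIdeal 𝒜 hx (mem_geIdeal_zero 𝒜 b)⟩

lemma setIsHomogeneous_geIdeal (n : ℕ) : SetIsHomogeneous 𝒜 (geIdeal 𝒜 n) := by
  intro x hx k
  by_cases hk : k < n
  · rw [hx k hk]
    exact (geIdealAddSubgroup 𝒜 n).zero_mem
  · exact mem_geIdeal_of_mem 𝒜 (SetLike.coe_mem _) (not_lt.1 hk)

lemma setIdealPow_subset_geIdeal : ∀ n : ℕ, setIdealPow (geIdeal 𝒜 1) n ⊆ geIdeal 𝒜 n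
  | 0 => fun x _ => mem_geIdeal_zero 𝒜 x
  | n + 1 => by
    refine (isRightIdealSet_geIdeal 𝒜 (n + 1)).closure_subset ?_
    rintro _ ⟨x, hx, y, hy, rfl⟩
    rw [Nat.add_comm]
    exact mul_mem_geIdeal 𝒜 hx (setIdealPow_subset_geIdeal n hy)

end Tails

section TFilter

variable {A : Type*} [Ring A] {𝒜 : ℕ → AddSubgroup A} [GradedRing 𝒜] {F : Set (Set A)}

lemma IsTFilter.superset (hF : IsTFilter 𝒜 F) {I J : Set A} (hI : I ∈ F)
    (hJr : IsRightIdealSet J) (hJh : SetIsHomogeneous 𝒜 J) (hIJ : I ⊆ J) : J ∈ F := by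
  refine hF.saturated I hI J hJr hJh fun a ha _ => ?_
  convert hF.univ_mem
  exact Set.eq_univ_of_forall fun x => hJr.2.2.2 a (hIJ ha) x

lemma IsTFilter.setIdealPow_mem (hF : IsTFilter 𝒜 F) {I : Set A} (hI : I ∈ F) :
    ∀ n, setIdealPow I n ∈ F
  | 0 => hF.univ_mem
  | n + 1 => by
    have hIh := (hF.mem_ideal I hI).2
    refine hF.saturated I hI _ (isRightIdealSet_setIdealPow I _) (hIh.setIdealPow 𝒜 _)
      fun a ha ⟨d, hd⟩ => ?_
    refine hF.superset (hF.setIdealPow_mem hI n) ((isRightIdealSet_setIdealPow I _).colon a)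
      (setIsHomogeneous_colon 𝒜 (hIh.setIdealPow 𝒜 _) hd) fun y hy => ?_
    exact AddSubgroup.subset_closure ⟨a, ha, y, hy, rfl⟩

variable (𝒜) in
def powerFilter (I : Set A) : Set (Set A) :=
  {J : Set A | IsRightIdealSet J ∧ SetIsHomogeneous 𝒜 J ∧ ∃ n : ℕ, setIdealPow I n ⊆ J}

variable (𝒜) in
theorem isTFilter_powerFilter {I : Set A} (hI : SetIsHomogeneous 𝒜 I)
    (hIl : ∀ r : A, ∀ x ∈ I, r * x ∈ I) (hfg : IsFGRightIdealSet I) :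
    IsTFilter 𝒜 (powerFilter 𝒜 I) where
  mem_ideal _ hJ := ⟨hJ.1, hJ.2.1⟩
  univ_mem := ⟨isRightIdealSet_univ, setIsHomogeneous_univ 𝒜, 0, Set.subset_univ _⟩
  colon_mem := by
    rintro J ⟨hJr, hJh, n, hn⟩ a ⟨d, hd⟩
    exact ⟨hJr.colon a, setIsHomogeneous_colon 𝒜 hJh hd, n,
      fun x hx => hn (mul_mem_setIdealPow hIl a hx)⟩
  saturated := by
    rintro J ⟨-, -, n, hn⟩ K hKr hKh hcolon
    obtain ⟨t, ht, htI, hIt⟩ := exists_homogeneous_generators 𝒜 hI hfg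
    refine ⟨hKr, hKh, exists_setIdealPow_subset_of_colon htI hIt hIl (IsHomogeneousElem 𝒜)
      ⟨0, SetLike.one_mem_graded 𝒜⟩ ?_ n K hKr fun p hp hpH => (hcolon p (hn hp) hpH).2.2⟩
    rintro a ha p ⟨e, hp⟩
    obtain ⟨d, hd⟩ := ht a ha
    exact ⟨d + e, SetLike.mul_mem_graded hd hp⟩

lemma IsTFilter.powerFilter_subset_iff (hF : IsTFilter 𝒜 F) {I : Set A}
    (hIr : IsRightIdealSet I) (hIh : SetIsHomogeneous 𝒜 I) : powerFilter 𝒜 I ⊆ F ↔ I ∈ F := by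
  refine ⟨fun h => h ⟨hIr, hIh, 1, hIr.closure_subset ?_⟩, fun hI J ⟨hJr, hJh, n, hn⟩ =>
    hF.superset (hF.setIdealPow_mem hI n) hJr hJh hn⟩
  rintro _ ⟨x, hx, y, -, rfl⟩
  exact hIr.2.2.2 x hx y

end TFilter

/-- Lemmas 3.2 and 3.3. -/
theorem tFilter_powers_of_irrelevant {A : Type*} [Ring A] (𝒜 : ℕ → AddSubgroup A)
    [GradedRing 𝒜] (hfg : IsFGRightIdealSet (geIdeal 𝒜 1)) :
    IsTFilter 𝒜 {I : Set A | IsRightIdealSet I ∧ SetIsHomogeneous 𝒜 I ∧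
        ∃ n : ℕ, setIdealPow (geIdeal 𝒜 1) n ⊆ I} ∧
      ∀ F : Set (Set A), IsTFilter 𝒜 F →
        ((geIdeal 𝒜 1 ∈ F ↔ ∀ n : ℕ, geIdeal 𝒜 n ∈ F) ∧
          (geIdeal 𝒜 1 ∈ F ↔
            {I : Set A | IsRightIdealSet I ∧ SetIsHomogeneous 𝒜 I ∧
              ∃ n : ℕ, setIdealPow (geIdeal 𝒜 1) n ⊆ I} ⊆ F)) := by
  refine ⟨isTFilter_powerFilter 𝒜 (setIsHomogeneous_geIdeal 𝒜 1)
    (fun r _ => mul_mem_geIdeal_left 𝒜 r) hfg, fun F hF => ⟨⟨fun h n => ?_, fun h => h 1⟩,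
    (hF.powerFilter_subset_iff (isRightIdealSet_geIdeal 𝒜 1) (setIsHomogeneous_geIdeal 𝒜 1)).symm⟩⟩
  exact hF.superset (hF.setIdealPow_mem h n) (isRightIdealSet_geIdeal 𝒜 n)
    (setIsHomogeneous_geIdeal 𝒜 n) (setIdealPow_subset_geIdeal 𝒜 n)
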